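/- Let i, a, b, j, ℓ be even nonnegative integers with i ≤ a ≤ ℓ−2 and ℓ ≤ b ≤ j. Let A be the square matrix of size (a−i)/2 + 1 whose rows are indexed by r ∈ {i+2, i+4, …, a} ∪ {j} (in increasing order), whose columns are indexed by c ∈ {i, i+2, …, a−2} ∪ {b} (in increasing order), and whose (r,c)-entry is α(r,c) := (−1)^{(r−c)/2} · r! / (((r−c)/2)! · c! · 2^{(r−c)/2}) if r ≥ c, and 0 if r < c. Then det(A) = (−1)^{(j−b)/2} · (j! / (((j−b)/2)! · b! · 2^{(j−b)/2})) · (−1)^{(a−i)/2} · (a! / (((a−i)/2)! · i! · 2^{(a−i)/2})). -/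

import Mathlib

/-!
The last column vanishes above its bottom entry `α(j, b)`, so the determinant is `α(j, b)` times
the minor of the unitriangular matrix `L = (α(i + 2t, i + 2s))_{0 ≤ t, s ≤ n}`, `n = (a - i)/2`,
obtained by deleting its first row and last column. Since
`α(i + 2t, i + 2s) = (i + 2t)! · [z^{t-s}] e^{-z/2} / (i + 2s)!`, conjugating `L` by the diagonal
matrix `((i + 2t)!)` gives the lower triangular Toeplitz matrix of `e^{-z/2}`, whose inverse is
that of `e^{z/2}`. By the cofactor formula the minor is `(-1)^n (L⁻¹)_{n,0}
= (-1)^n (i + 2n)! / (n! i! 2^n) = α(a, i)`.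
-/

open Finset

/-- The entry `α(r,c) = (-1)^{(r-c)/2} · r! / (((r-c)/2)! · c! · 2^{(r-c)/2})` for `r ≥ c`,
and `0` for `r < c`. -/
noncomputable def alphaEnt (r c : ℕ) : ℝ :=
  if c ≤ r then
    (-1 : ℝ) ^ ((r - c) / 2) * (Nat.factorial r) /
      ((Nat.factorial ((r - c) / 2)) * (Nat.factorial c) * 2 ^ ((r - c) / 2))
  else 0

open PowerSeries Matrix Nat

section LowerToeplitz

variable {R : Type*}

noncomputable def lowerToeplitz [Semiring R] (m : ℕ) (p : R⟦X⟧) : Matrix (Fin m) (Fin m) R :=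
  of fun t s => if s ≤ t then coeff ((t : ℕ) - s) p else 0

theorem lowerToeplitz_mul [Semiring R] (m : ℕ) (p q : R⟦X⟧) :
    lowerToeplitz m (p * q) = lowerToeplitz m p * lowerToeplitz m q := by
  ext t u
  simp only [lowerToeplitz, mul_apply, of_apply, ite_mul, mul_ite, zero_mul, mul_zero,
    ← ite_and, ← sum_filter]
  split_ifs with hut
  · have ht := t.isLt
    rw [Fin.le_def] at hut
    rw [coeff_mul]
    refine sum_bij' (fun x hx => ⟨u + x.2, by simp at hx; omega⟩)
      (fun s _ => ((t : ℕ) - s, (s : ℕ) - u)) ?_ ?_ ?_ ?_ ?_ <;>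
      simp only [HasAntidiagonal.mem_antidiagonal, mem_filter, mem_univ, true_and, Fin.le_def,
        Fin.ext_iff, Prod.ext_iff]
    · intro x hx
      omega
    · intro s hs
      omega
    · intro x hx
      omega
    · intro s hs
      omega
    · intro x hx
      congr 3 <;> omega
  · refine (sum_eq_zero fun s hs => ?_).symm
    rw [mem_filter] at hs
    exact absurd (hs.2.1.trans hs.2.2) hut

theorem lowerToeplitz_one [Semiring R] (m : ℕ) : lowerToeplitz m (1 : R⟦X⟧) = 1 := by
  ext t s
  simp only [lowerToeplitz, of_apply, one_apply, coeff_one]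
  split_ifs <;> first | rfl | omega

theorem lowerToeplitz_rescale_exp_mul_eq_one [CommRing R] [Algebra ℚ R] (m : ℕ)
    {x y : R} (hxy : x + y = 0) :
    lowerToeplitz m (rescale x (exp R)) * lowerToeplitz m (rescale y (exp R)) = 1 := by
  rw [← lowerToeplitz_mul, exp_mul_exp_eq_exp_add, hxy, rescale_zero,
    RingHom.comp_apply, constantCoeff_exp, map_one, lowerToeplitz_one]

end LowerToeplitz

section Cofactor

variable {R : Type*} [CommRing R] {n : ℕ}

theorem det_submatrix_succ_castSucc_of_mul_eq_one
    {A B : Matrix (Fin (n + 1)) (Fin (n + 1)) R} (h : A * B = 1) :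
    (A.submatrix Fin.succ Fin.castSucc).det = (-1) ^ n * A.det * B (Fin.last n) 0 := by
  have hadj : adjugate A = A.det • B := by
    rw [← mul_one (adjugate A), ← h, ← Matrix.mul_assoc, adjugate_mul, smul_one_mul]
  have hcof := adjugate_fin_succ_eq_det_submatrix A (Fin.last n) 0
  rw [hadj, Fin.succAbove_zero, Fin.succAbove_last, Matrix.smul_apply, smul_eq_mul,
    Fin.val_zero, Fin.val_last, zero_add] at hcof
  rw [mul_assoc, hcof, ← mul_assoc, ← mul_pow, neg_one_mul, neg_neg, one_pow, one_mul]

theorem det_fin_succ_of_castSucc_last_eq_zero (M : Matrix (Fin (n + 1)) (Fin (n + 1)) R)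
    (h : ∀ t : Fin n, M t.castSucc (Fin.last n) = 0) :
    M.det = M (Fin.last n) (Fin.last n) * (M.submatrix Fin.castSucc Fin.castSucc).det := by
  rw [det_succ_column M (Fin.last n), Fin.sum_univ_castSucc]
  simp [h, Fin.succAbove_last, ← two_mul, pow_mul]

end Cofactor

section Alpha

theorem alphaEnt_of_lt {r c : ℕ} (h : r < c) : alphaEnt r c = 0 := if_neg h.not_ge

theorem alphaEnt_add_two_mul (c k : ℕ) :
    alphaEnt (c + 2 * k) c = (c + 2 * k)! * ((-1 / 2) ^ k / k !) / c ! := by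
  rw [alphaEnt, if_pos (by omega), show (c + 2 * k - c) / 2 = k by omega, div_pow]
  ring

theorem alphaEnt_self (c : ℕ) : alphaEnt c c = 1 := by
  simpa [(Nat.cast_pos.2 c.factorial_pos).ne'] using alphaEnt_add_two_mul c 0

noncomputable def alphaMatrix (i n : ℕ) : Matrix (Fin n) (Fin n) ℝ :=
  of fun t s => alphaEnt (i + 2 * t) (i + 2 * s)

variable (i n : ℕ)

theorem det_alphaMatrix : (alphaMatrix i n).det = 1 := by
  rw [det_of_isLowerTriangular]
  · simp [alphaMatrix, alphaEnt_self]
  · intro t s hts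
    exact alphaEnt_of_lt (by simp at hts; omega)

theorem alphaMatrix_eq_diagonal_mul_lowerToeplitz :
    alphaMatrix i n = diagonal (fun t : Fin n => ((i + 2 * t)! : ℝ)) *
      lowerToeplitz n (rescale (-1 / 2) (exp ℝ)) *
      diagonal (fun t : Fin n => ((i + 2 * t)! : ℝ)⁻¹) := by
  ext t s
  simp only [alphaMatrix, lowerToeplitz, of_apply, diagonal_mul, mul_diagonal, coeff_rescale,
    coeff_exp]
  split_ifs with hst
  · obtain ⟨k, hk⟩ := Nat.exists_eq_add_of_le (Fin.le_def.1 hst)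
    rw [hk, show i + 2 * (s + k) = (i + 2 * s) + 2 * k by ring, alphaEnt_add_two_mul]
    simp only [add_tsub_cancel_left, one_div, map_inv₀, map_natCast]
    ring
  · rw [alphaEnt_of_lt (by omega), mul_zero, zero_mul]

theorem alphaMatrix_mul_eq_one :
    alphaMatrix i n * (diagonal (fun t : Fin n => ((i + 2 * t)! : ℝ)) *
      lowerToeplitz n (rescale (1 / 2) (exp ℝ)) *
      diagonal (fun t : Fin n => ((i + 2 * t)! : ℝ)⁻¹)) = 1 := by
  rw [alphaMatrix_eq_diagonal_mul_lowerToeplitz]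
  set D := diagonal (fun t : Fin n => ((i + 2 * t)! : ℝ))
  set D' := diagonal (fun t : Fin n => ((i + 2 * t)! : ℝ)⁻¹)
  have hD'D : D' * D = 1 := by
    rw [diagonal_mul_diagonal, ← diagonal_one]
    exact congrArg diagonal (funext fun t => inv_mul_cancel₀ (by positivity))
  have hDD' : D * D' = 1 := by
    rw [diagonal_mul_diagonal, ← diagonal_one]
    exact congrArg diagonal (funext fun t => mul_inv_cancel₀ (by positivity))
  have hT := lowerToeplitz_rescale_exp_mul_eq_one n (show (-1 / 2 : ℝ) + 1 / 2 = 0 by norm_num)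
  calc D * lowerToeplitz n (rescale (-1 / 2) (exp ℝ)) * D' *
        (D * lowerToeplitz n (rescale (1 / 2) (exp ℝ)) * D')
      = D * (lowerToeplitz n (rescale (-1 / 2) (exp ℝ)) * (D' * D) *
          lowerToeplitz n (rescale (1 / 2) (exp ℝ))) * D' := by
        simp only [Matrix.mul_assoc]
    _ = 1 := by rw [hD'D, Matrix.mul_one, hT, Matrix.mul_one, hDD']

theorem det_alphaMatrix_submatrix_succ_castSucc :
    ((alphaMatrix i (n + 1)).submatrix Fin.succ Fin.castSucc).det = alphaEnt (i + 2 * n) i := by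
  rw [det_submatrix_succ_castSucc_of_mul_eq_one (alphaMatrix_mul_eq_one i (n + 1)),
    det_alphaMatrix, alphaEnt_add_two_mul]
  simp [mul_diagonal, diagonal_mul, lowerToeplitz, coeff_rescale, coeff_exp, div_pow]
  ring

end Alpha

theorem det_alpha_row_and_column_replaced_general (i a b j ℓ : ℕ)
    (hi : Even i) (ha : Even a)
    (hia : i ≤ a) (haℓ : a + 2 ≤ ℓ) (hℓb : ℓ ≤ b) (hbj : b ≤ j) :
    (Matrix.of fun t s : Fin ((a - i) / 2 + 1) =>
        alphaEnt (if (t : ℕ) < (a - i) / 2 then i + 2 * ((t : ℕ) + 1) else j)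
          (if (s : ℕ) < (a - i) / 2 then i + 2 * (s : ℕ) else b)).det =
      ((-1 : ℝ) ^ ((j - b) / 2) *
          ((Nat.factorial j) /
            (Nat.factorial ((j - b) / 2) * Nat.factorial b * 2 ^ ((j - b) / 2)))) *
        ((-1 : ℝ) ^ ((a - i) / 2) *
          ((Nat.factorial a) /
            (Nat.factorial ((a - i) / 2) * Nat.factorial i * 2 ^ ((a - i) / 2)))) := by
  have ha_eq : a = i + 2 * ((a - i) / 2) := by
    obtain ⟨p, rfl⟩ := hi
    obtain ⟨q, rfl⟩ := ha
    omega
  set n := (a - i) / 2 with hn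
  calc _ = alphaEnt j b * ((alphaMatrix i (n + 1)).submatrix Fin.succ Fin.castSucc).det := by
        rw [det_fin_succ_of_castSucc_last_eq_zero _ fun t => ?_]
        · congr 1
          · simp
          · congr 1
            ext t s
            simp [alphaMatrix]
        · simp only [of_apply, Fin.val_last, Fin.val_castSucc, lt_irrefl, t.isLt, ↓reduceIte]
          exact alphaEnt_of_lt (by omega)
    _ = alphaEnt j b * alphaEnt a i := by
        rw [det_alphaMatrix_submatrix_succ_castSucc, ← ha_eq]
    _ = _ := by
        simp only [alphaEnt, if_pos hbj, if_pos hia, ← hn]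
        ring

/-- Determinant of the matrix with rows indexed by `{i+2, i+4, …, a} ∪ {j}`, columns indexed
by `{i, i+2, …, a-2} ∪ {b}`, and entries `α(r,c)`. -/
theorem det_alpha_row_and_column_replaced (i a b j ℓ : ℕ)
    (hi : Even i) (ha : Even a) (hb : Even b) (hj : Even j) (hℓ : Even ℓ)
    (hia : i ≤ a) (haℓ : a + 2 ≤ ℓ) (hℓb : ℓ ≤ b) (hbj : b ≤ j) :
    (Matrix.of fun t s : Fin ((a - i) / 2 + 1) =>
        alphaEnt (if (t : ℕ) < (a - i) / 2 then i + 2 * ((t : ℕ) + 1) else j)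
          (if (s : ℕ) < (a - i) / 2 then i + 2 * (s : ℕ) else b)).det =
      ((-1 : ℝ) ^ ((j - b) / 2) *
          ((Nat.factorial j) /
            (Nat.factorial ((j - b) / 2) * Nat.factorial b * 2 ^ ((j - b) / 2)))) *
        ((-1 : ℝ) ^ ((a - i) / 2) *
          ((Nat.factorial a) /
            (Nat.factorial ((a - i) / 2) * Nat.factorial i * 2 ^ ((a - i) / 2)))) :=
  det_alpha_row_and_column_replaced_general i a b j ℓ hi ha hia haℓ hℓb hbj
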